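/- Let G be a finite simple graph on an even number n of vertices with a perfect matching M, and suppose the minimum degree δ of G satisfies δ ≥ 3 and δ ≥ n/2. Then OPT(G) ≤ ALG(G, M) + 1. -/

import Mathlib

open SimpleGraph

/-- `C` is an edge 2-coloring of `G`: for every vertex, the edges incident to it
carry at most 2 distinct colors. -/
def IsEdge2Coloring {V : Type*} (G : SimpleGraph V) (C : Sym2 V → ℕ) : Prop :=
  ∀ v : V, (C '' G.incidenceSet v).ncard ≤ 2

/-- The number of distinct colors used by a coloring `C` on the edges of `G`. -/
noncomputable def numColors {V : Type*} (G : SimpleGraph V) (C : Sym2 V → ℕ) : ℕ :=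
  (C '' G.edgeSet).ncard

/-- `OPT G`: the maximum number of colors used by an edge 2-coloring of `G`. -/
noncomputable def OPT {V : Type*} (G : SimpleGraph V) : ℕ :=
  sSup {n : ℕ | ∃ C : Sym2 V → ℕ, IsEdge2Coloring G C ∧ numColors G C = n}

/-- `M` is a matching of `G`, given as a set of edges: the edges belong to `G` and
are pairwise vertex-disjoint. -/
def IsMatchingSet {V : Type*} (G : SimpleGraph V) (M : Set (Sym2 V)) : Prop :=
  M ⊆ G.edgeSet ∧ ∀ e ∈ M, ∀ f ∈ M, e ≠ f → ∀ v : V, v ∈ e → v ∉ f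

/-- `ALG G M`: number of colors produced by the matching based algorithm, i.e.
`|M|` plus the number of connected components of `G − M`. -/
noncomputable def ALG {V : Type*} (G : SimpleGraph V) (M : Set (Sym2 V)) : ℕ :=
  M.ncard + Nat.card (G.deleteEdges M).ConnectedComponent

/-- `H` is a characteristic subgraph of `G` with respect to the coloring `C`:
a subgraph of `G` containing exactly one edge of each color used by `C`. -/
def IsCharSubgraph {V : Type*} (G : SimpleGraph V) (C : Sym2 V → ℕ)
    (H : SimpleGraph V) : Prop :=
  H ≤ G ∧ ∀ c ∈ C '' G.edgeSet, ∃! e, e ∈ H.edgeSet ∧ C e = c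

/-!
Since `M` covers all `n` vertices, `|M| ≥ n/2`, and `G − M` has a component, so
`ALG(G, M) ≥ n/2 + 1`; it suffices that every edge 2-coloring uses at most `n/2 + 2` colors.
Let a color `c` seen at `s_c ≥ 2` vertices give weight `1/s_c` to each of them, so that the
weights add up to the number of colors. A vertex seeing one color receives at most `1/2`. If
`v` sees two colors `a, b`, the two color classes cover the closed neighbourhood of `v` and
both contain `v`, so `s_a + s_b ≥ deg v + 2 ≥ n/2 + 2`; with `s_a, s_b ≥ 2` this forces
`1/s_a + 1/s_b ≤ 1/2 + 2/n`. Summing over the `n` vertices gives at most `n/2 + 2` colors.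
-/

open Finset

lemma inv_add_inv_le_half_add_inv {x y d : ℝ} (hx : 2 ≤ x) (hy : 2 ≤ y) (hd : 0 < d)
    (hxy : d + 2 ≤ x + y) : x⁻¹ + y⁻¹ ≤ 2⁻¹ + d⁻¹ := by
  have hprod : 0 ≤ (x - 2) * (y - 2) := mul_nonneg (sub_nonneg.2 hx) (sub_nonneg.2 hy)
  have hquot : 2 ≤ x * y / d := (le_div_iff₀ hd).2 (by nlinarith)
  rw [inv_add_inv (by positivity) (by positivity), div_le_iff₀ (by positivity), add_mul,
    inv_mul_eq_div, inv_mul_eq_div]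
  nlinarith

section Coloring

variable {V : Type*} [Fintype V] (G : SimpleGraph V) [DecidableRel G.Adj] (C : Sym2 V → ℕ)

lemma numColors_eq_card : numColors G C = #(G.edgeFinset.image C) := by
  rw [numColors, ← coe_edgeFinset, ← coe_image, Set.ncard_coe_finset]

variable [DecidableEq V]

def colorsAt (v : V) : Finset ℕ := (G.incidenceFinset v).image C

def colorClass (c : ℕ) : Finset V := {v | c ∈ colorsAt G C v}

variable {G C}

lemma mem_colorsAt {v : V} {c : ℕ} : c ∈ colorsAt G C v ↔ ∃ w, G.Adj v w ∧ C s(v, w) = c := by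
  simp only [colorsAt, mem_image, mem_incidenceFinset]
  constructor
  · rintro ⟨e, he, rfl⟩
    obtain ⟨w, rfl⟩ := Sym2.mem_iff_exists.1 he.2
    exact ⟨w, (G.mem_incidenceSet v w).1 he, rfl⟩
  · rintro ⟨w, hw, rfl⟩
    exact ⟨s(v, w), G.mk'_mem_incidenceSet_left_iff.2 hw, rfl⟩

lemma mem_colorClass {v : V} {c : ℕ} : v ∈ colorClass G C c ↔ c ∈ colorsAt G C v := by
  simp [colorClass]

lemma left_mem_colorClass_of_adj {v w : V} (h : G.Adj v w) : v ∈ colorClass G C (C s(v, w)) :=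
  mem_colorClass.2 (mem_colorsAt.2 ⟨w, h, rfl⟩)

lemma right_mem_colorClass_of_adj {v w : V} (h : G.Adj v w) : w ∈ colorClass G C (C s(v, w)) :=
  Sym2.eq_swap ▸ left_mem_colorClass_of_adj h.symm

lemma two_le_card_colorClass {v w : V} (h : G.Adj v w) : 2 ≤ #(colorClass G C (C s(v, w))) := by
  calc 2 = #{v, w} := (card_pair h.ne).symm
    _ ≤ _ := card_le_card <| insert_subset (left_mem_colorClass_of_adj h) <|
      singleton_subset_iff.2 (right_mem_colorClass_of_adj h)

lemma card_colorsAt_le_two (hC : IsEdge2Coloring G C) (v : V) : #(colorsAt G C v) ≤ 2 := by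
  have := hC v
  rwa [← coe_incidenceFinset, ← coe_image, Set.ncard_coe_finset] at this

lemma degree_add_two_le_of_colorsAt_eq_pair {a b : ℕ} {v : V} (hv : colorsAt G C v = {a, b}) :
    G.degree v + 2 ≤ #(colorClass G C a) + #(colorClass G C b) := by
  have hvA : v ∈ colorClass G C a := mem_colorClass.2 (by simp [hv])
  have hvB : v ∈ colorClass G C b := mem_colorClass.2 (by simp [hv])
  have hN : insert v (G.neighborFinset v) ⊆ colorClass G C a ∪ colorClass G C b := by
    refine insert_subset (mem_union_left _ hvA) fun w hw => ?_
    have hvw : G.Adj v w := (G.mem_neighborFinset v w).1 hw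
    have hc : C s(v, w) ∈ ({a, b} : Finset ℕ) := hv ▸ mem_colorsAt.2 ⟨w, hvw, rfl⟩
    rcases mem_insert.1 hc with hc | hc
    · exact mem_union_left _ (hc ▸ right_mem_colorClass_of_adj (C := C) hvw)
    · exact mem_union_right _ (mem_singleton.1 hc ▸ right_mem_colorClass_of_adj (C := C) hvw)
  have hcard := card_le_card hN
  rw [card_insert_of_notMem (G.notMem_neighborFinset_self v), card_neighborFinset_eq_degree]
    at hcard
  have hAB : 1 ≤ #(colorClass G C a ∩ colorClass G C b) :=
    card_pos.2 ⟨v, mem_inter.2 ⟨hvA, hvB⟩⟩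
  have := card_union_add_card_inter (colorClass G C a) (colorClass G C b)
  omega

lemma two_le_card_colorClass_of_mem_colorsAt {v : V} {c : ℕ} (hc : c ∈ colorsAt G C v) :
    2 ≤ #(colorClass G C c) := by
  obtain ⟨w, hvw, rfl⟩ := mem_colorsAt.1 hc
  exact two_le_card_colorClass hvw

lemma sum_inv_card_colorClass_le (hC : IsEdge2Coloring G C) {d : ℕ} (hd : 0 < d) {v : V}
    (hdeg : d ≤ G.degree v) :
    ∑ c ∈ colorsAt G C v, (#(colorClass G C c) : ℝ)⁻¹ ≤ 2⁻¹ + (d : ℝ)⁻¹ := by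
  have h2 : ∀ c ∈ colorsAt G C v, (2 : ℝ) ≤ #(colorClass G C c) := fun c hc => by
    exact_mod_cast two_le_card_colorClass_of_mem_colorsAt hc
  have hd' : (0 : ℝ) < d := by exact_mod_cast hd
  have hcard := card_colorsAt_le_two hC v
  interval_cases hk : #(colorsAt G C v)
  · rw [card_eq_zero.1 hk, sum_empty]
    positivity
  · obtain ⟨a, hv⟩ := card_eq_one.1 hk
    have ha := h2 a (by simp [hv])
    rw [hv, sum_singleton]
    calc (#(colorClass G C a) : ℝ)⁻¹ ≤ 2⁻¹ := inv_anti₀ two_pos ha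
      _ ≤ 2⁻¹ + (d : ℝ)⁻¹ := le_add_of_nonneg_right (by positivity)
  · obtain ⟨a, b, hab, hv⟩ := card_eq_two.1 hk
    rw [hv, sum_pair hab]
    refine inv_add_inv_le_half_add_inv (h2 a (by simp [hv])) (h2 b (by simp [hv])) hd' ?_
    exact_mod_cast (degree_add_two_le_of_colorsAt_eq_pair hv).trans' (by omega)

lemma mem_image_edgeFinset_of_mem_colorsAt {v : V} {c : ℕ} (hc : c ∈ colorsAt G C v) :
    c ∈ G.edgeFinset.image C := by
  obtain ⟨w, hvw, rfl⟩ := mem_colorsAt.1 hc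
  exact mem_image_of_mem C (G.mem_edgeFinset.2 hvw)

lemma numColors_eq_sum_sum_inv_card_colorClass :
    (numColors G C : ℝ) = ∑ v, ∑ c ∈ colorsAt G C v, (#(colorClass G C c) : ℝ)⁻¹ := by
  have hshare : ∀ c ∈ G.edgeFinset.image C,
      ∑ _v ∈ colorClass G C c, (#(colorClass G C c) : ℝ)⁻¹ = 1 := by
    intro c hc
    obtain ⟨e, he, rfl⟩ := mem_image.1 hc
    induction e using Sym2.ind with | h x y => ?_
    have hpos : (0 : ℝ) < #(colorClass G C (C s(x, y))) := by
      exact_mod_cast (two_le_card_colorClass (G.mem_edgeFinset.1 he)).trans_lt' two_pos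
    rw [sum_const, nsmul_eq_mul, mul_inv_cancel₀ hpos.ne']
  rw [numColors_eq_card, card_eq_sum_ones, Nat.cast_sum, Nat.cast_one, ← sum_congr rfl hshare]
  exact sum_comm' fun c v => ⟨fun h => ⟨mem_colorClass.1 h.2, mem_univ v⟩,
    fun h => ⟨mem_image_edgeFinset_of_mem_colorsAt h.1, mem_colorClass.2 h.1⟩⟩

lemma numColors_le_of_le_degree (hC : IsEdge2Coloring G C) {d : ℕ} (hd : 0 < d)
    (hdeg : ∀ v, d ≤ G.degree v) :
    (numColors G C : ℝ) ≤ Fintype.card V * (2⁻¹ + (d : ℝ)⁻¹) := by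
  rw [numColors_eq_sum_sum_inv_card_colorClass]
  calc _ ≤ ∑ _v : V, (2⁻¹ + (d : ℝ)⁻¹) :=
        sum_le_sum fun v _ => sum_inv_card_colorClass_le hC hd (hdeg v)
    _ = _ := by rw [sum_const, card_univ, nsmul_eq_mul]

end Coloring

lemma numColors_le_half_card_add_two {V : Type*} [Fintype V] [DecidableEq V] [Nonempty V]
    {G : SimpleGraph V} [DecidableRel G.Adj] {C : Sym2 V → ℕ} (hC : IsEdge2Coloring G C)
    (hn : Even (Fintype.card V)) (hdeg : ∀ v, Fintype.card V / 2 ≤ G.degree v) :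
    numColors G C ≤ Fintype.card V / 2 + 2 := by
  obtain ⟨d, hd⟩ := hn
  have hhalf : Fintype.card V / 2 = d := by omega
  have hd0 : 0 < d := by have := Fintype.card_pos (α := V); omega
  rw [hhalf] at hdeg ⊢
  have h := numColors_le_of_le_degree hC hd0 hdeg
  have hd0' : (d : ℝ) ≠ 0 := by positivity
  rw [hd, Nat.cast_add, show ((d : ℝ) + d) * (2⁻¹ + (d : ℝ)⁻¹) = d + 2 by field_simp; ring] at h
  exact_mod_cast h

lemma card_le_two_mul_ncard_of_forall_mem {V : Type*} [Fintype V] {M : Set (Sym2 V)}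
    (hM : ∀ v : V, ∃ e ∈ M, v ∈ e) : Fintype.card V ≤ 2 * M.ncard := by
  classical
  have hcover : (univ : Finset V) ⊆ M.toFinset.biUnion Sym2.toFinset := fun v _ => by
    obtain ⟨e, he, hv⟩ := hM v
    exact mem_biUnion.2 ⟨e, Set.mem_toFinset.2 he, Sym2.mem_toFinset.2 hv⟩
  calc Fintype.card V ≤ #(M.toFinset.biUnion Sym2.toFinset) := card_le_card hcover
    _ ≤ #M.toFinset * 2 := card_biUnion_le_card_mul _ _ _ fun e _ => by
        rw [Sym2.card_toFinset]; split_ifs <;> omega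
    _ = 2 * M.ncard := by rw [Set.ncard_eq_toFinset_card', mul_comm]

theorem opt_le_alg_add_one_general {V : Type*} [Fintype V] (G : SimpleGraph V)
    (hn : Even (Fintype.card V)) (δ : ℕ)
    (hδhalf : Fintype.card V / 2 ≤ δ)
    (hδ : ∀ v : V, δ ≤ (G.neighborSet v).ncard)
    (M : Set (Sym2 V)) (hMperf : ∀ v : V, ∃ e ∈ M, v ∈ e) :
    OPT G ≤ ALG G M + 1 := by
  classical
  refine csSup_le' ?_
  rintro _ ⟨C, hC, rfl⟩
  rcases isEmpty_or_nonempty V with hV | hV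
  · simp [numColors, Set.eq_empty_of_isEmpty]
  have hdeg : ∀ v, Fintype.card V / 2 ≤ G.degree v := fun v => by
    rw [← card_neighborSet_eq_degree, ← Set.toFinset_card, ← Set.ncard_eq_toFinset_card']
    exact hδhalf.trans (hδ v)
  have hcolors := numColors_le_half_card_add_two hC hn hdeg
  have hmatch := card_le_two_mul_ncard_of_forall_mem hMperf
  have hcomp : 1 ≤ Nat.card (G.deleteEdges M).ConnectedComponent := Nat.card_pos
  rw [ALG]
  omega

/-- For a graph on an even number `n` of vertices with a perfect matching `M` and
minimum degree `δ ≥ 3` with `δ ≥ n/2`, we have `OPT(G) ≤ ALG(G, M) + 1`. -/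
theorem opt_le_alg_add_one {V : Type*} [Fintype V] (G : SimpleGraph V)
    (hn : Even (Fintype.card V)) (δ : ℕ)
    (hδ3 : 3 ≤ δ) (hδhalf : Fintype.card V / 2 ≤ δ)
    (hδ : ∀ v : V, δ ≤ (G.neighborSet v).ncard)
    (M : Set (Sym2 V)) (hM : IsMatchingSet G M) (hMperf : ∀ v : V, ∃ e ∈ M, v ∈ e) :
    OPT G ≤ ALG G M + 1 :=
  opt_le_alg_add_one_general G hn δ hδhalf hδ M hMperf
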